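/- Let φ : T → T be a Lipschitz self-map such that φ⁻¹({v}) is finite for every vertex v. Then the composition operator C_φ maps Lip_0(T) into itself. In particular this holds if φ is injective. -/

import Mathlib

/-!
Every edge of the tree joins a vertex to its parent, so the increments `f u - f u⁻` of `f`
telescope along the geodesic from `φ v` to `φ v⁻`, whose length is at most the Lipschitz
constant `C` of `φ`. Balls around the root are finite and the fibres of `φ` are finite, so
`|φ v| → ∞` as `|v| → ∞`. For large `|v|` the whole geodesic therefore lies far from the
root, where the increments of `f ∈ Lip₀` are below `ε / (C + 1)`.
-/

/-- An infinite, locally finite rooted tree in which every vertex other than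
the root has degree greater than 1, together with the parent map. -/
structure LipTree (V : Type*) where
  root : V
  G : SimpleGraph V
  isTree : G.IsTree
  locFin : ∀ v : V, (G.neighborSet v).Finite
  infinite : Infinite V
  deg_gt : ∀ v : V, v ≠ root → 1 < (G.neighborSet v).ncard
  par : V → V
  par_root : par root = root
  adj_par : ∀ v : V, v ≠ root → G.Adj v (par v)
  dist_par : ∀ v : V, v ≠ root → G.dist (par v) root + 1 = G.dist v root

namespace LipTree

variable {V : Type*}

/-- `|v|`, the distance from `v` to the root. -/
noncomputable def depth (T : LipTree V) (v : V) : ℕ := T.G.dist v T.root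

/-- membership in the Lipschitz space `Lip(T)`. -/
def MemLip (T : LipTree V) (f : V → ℂ) : Prop :=
  ∃ C : ℝ, ∀ v : V, v ≠ T.root → ‖f v - f (T.par v)‖ ≤ C

/-- membership in the little Lipschitz space `Lip₀(T)`. -/
def MemLip0 (T : LipTree V) (f : V → ℂ) : Prop :=
  T.MemLip f ∧ ∀ ε : ℝ, 0 < ε → ∃ N : ℕ, ∀ v : V, v ≠ T.root → N ≤ T.depth v →
    ‖f v - f (T.par v)‖ < ε

/-- the norm `‖f‖_Lip = max {|f(root)|, sup_{v ≠ root} |f(v) - f(v⁻)|}`. -/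
noncomputable def normLip (T : LipTree V) (f : V → ℂ) : ℝ :=
  max (‖f T.root‖)
    (sSup {r : ℝ | ∃ v : V, v ≠ T.root ∧ r = ‖f v - f (T.par v)‖})

/-- `φ` is a Lipschitz self-map of the tree. -/
noncomputable def LipschitzSelfMap (T : LipTree V) (φ : V → V) : Prop :=
  ∃ C : ℕ, ∀ v : V, v ≠ T.root → T.G.dist (φ v) (φ (T.par v)) ≤ C

/-- the Lipschitz number `λ_φ`. -/
noncomputable def lipNum (T : LipTree V) (φ : V → V) : ℝ :=
  sSup {r : ℝ | ∃ v : V, v ≠ T.root ∧ r = (T.G.dist (φ v) (φ (T.par v)) : ℝ)}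

/-- the composition operator `C_φ` maps `Lip₀` into itself and is bounded there. -/
def BoundedOnLip0 (T : LipTree V) (φ : V → V) : Prop :=
  (∀ f : V → ℂ, T.MemLip0 f → T.MemLip0 (f ∘ φ)) ∧
  ∃ C : ℝ, ∀ f : V → ℂ, T.MemLip0 f → T.normLip (f ∘ φ) ≤ C * T.normLip f

/-- `u` belongs to the sector `S_v` determined by `v`. -/
def InSector (T : LipTree V) (v u : V) : Prop := ∃ k : ℕ, T.par^[k] u = v

end LipTree

namespace SimpleGraph

variable {V : Type*} {G : SimpleGraph V}

lemma Walk.dist_le_length_of_mem_support {a b u : V} (p : G.Walk a b) (hu : u ∈ p.support) :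
    G.dist a u ≤ p.length := by
  classical
  exact (dist_le _).trans (p.length_takeUntil_le_length hu)

lemma IsTree.eq_penultimate_of_adj_of_dist_lt (hG : G.IsTree) {u x y : V} {p : G.Walk u x}
    (hp : p.IsPath) (hxy : G.Adj x y) (hyx : G.dist u y < G.dist u x) : y = p.penultimate := by
  obtain ⟨q, hq, hq_len⟩ := hG.connected.exists_path_of_dist u y
  have hx : x ∉ q.support := fun hx => by
    have := q.dist_le_length_of_mem_support hx
    omega
  exact hG.isAcyclic.eq_penultimate_of_adj_end hp hxy
    (hG.isAcyclic.mem_support_of_ne_mem_support_of_adj_of_isPath hp hq hxy hx)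

end SimpleGraph

namespace LipTree

open SimpleGraph

variable {V : Type*} (T : LipTree V)

lemma depth_par {v : V} (hv : v ≠ T.root) : T.depth (T.par v) + 1 = T.depth v :=
  T.dist_par v hv

lemma ne_root_of_depth_lt {x y : V} (h : T.depth y < T.depth x) : x ≠ T.root := by
  rintro rfl
  simp [depth] at h

lemma eq_par_of_adj_of_depth_lt {x y : V} (hxy : T.G.Adj x y) (h : T.depth y < T.depth x) :
    y = T.par x := by
  have hx := T.ne_root_of_depth_lt h
  have hlt : ∀ {z}, T.depth z < T.depth x → T.G.dist T.root z < T.G.dist T.root x :=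
    fun {z} h => by rwa [depth, depth, dist_comm (u := z), dist_comm (u := x)] at h
  obtain ⟨p, hp, -⟩ := T.isTree.connected.exists_path_of_dist T.root x
  rw [T.isTree.eq_penultimate_of_adj_of_dist_lt hp hxy (hlt h),
    T.isTree.eq_penultimate_of_adj_of_dist_lt hp (T.adj_par x hx) (hlt (by
      have := T.depth_par hx; omega))]

lemma eq_par_or_eq_par_of_adj {x y : V} (hxy : T.G.Adj x y) :
    (x ≠ T.root ∧ y = T.par x) ∨ (y ≠ T.root ∧ x = T.par y) := by
  have hdepth : T.depth x = T.depth y + 1 ∨ T.depth y = T.depth x + 1 := by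
    simpa only [depth, dist_comm (v := T.root)] using
      T.isTree.dist_eq_dist_add_one_of_adj T.root hxy
  rcases hdepth with h | h
  · exact .inl ⟨T.ne_root_of_depth_lt (y := y) (by omega),
      T.eq_par_of_adj_of_depth_lt hxy (by omega)⟩
  · exact .inr ⟨T.ne_root_of_depth_lt (y := x) (by omega),
      T.eq_par_of_adj_of_depth_lt hxy.symm (by omega)⟩

section Telescoping

variable {E : Type*} [SeminormedAddCommGroup E] (f : V → E) {δ : ℝ}

lemma norm_sub_le_mul_length {a b : V} (p : T.G.Walk a b)
    (hδ : ∀ u ∈ p.support, u ≠ T.root → ‖f u - f (T.par u)‖ ≤ δ) :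
    ‖f a - f b‖ ≤ δ * p.length := by
  induction p with
  | nil => simp
  | @cons u v w huv q ih =>
    have hedge : ‖f u - f v‖ ≤ δ := by
      rcases T.eq_par_or_eq_par_of_adj huv with ⟨hu, rfl⟩ | ⟨hv, rfl⟩
      · exact hδ u (by simp) hu
      · rw [norm_sub_rev]
        exact hδ v (by simp) hv
    have hrest := ih fun x hx hxr => hδ x (by simp [hx]) hxr
    calc ‖f u - f w‖ ≤ ‖f u - f v‖ + ‖f v - f w‖ := norm_sub_le_norm_sub_add_norm_sub _ _ _
      _ ≤ δ + δ * q.length := add_le_add hedge hrest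
      _ = δ * (q.cons huv).length := by push_cast [Walk.length_cons]; ring

lemma norm_sub_le_mul_dist {a b : V}
    (hδ : ∀ u, T.G.dist a u ≤ T.G.dist a b → u ≠ T.root → ‖f u - f (T.par u)‖ ≤ δ) :
    ‖f a - f b‖ ≤ δ * T.G.dist a b := by
  obtain ⟨p, hp⟩ := T.isTree.connected.exists_walk_length_eq_dist a b
  rw [← hp] at hδ ⊢
  exact T.norm_sub_le_mul_length f p fun u hu =>
    hδ u (p.dist_le_length_of_mem_support hu)

end Telescoping

lemma finite_setOf_depth_le (R : ℕ) : {u | T.depth u ≤ R}.Finite := by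
  induction R with
  | zero =>
    refine (Set.finite_singleton T.root).subset fun u hu => ?_
    simpa [depth, T.isTree.connected.dist_eq_zero_iff] using hu
  | succ R ih =>
    refine ((ih.biUnion fun w _ => T.locFin w).insert T.root).subset fun u hu => ?_
    by_cases hu_root : u = T.root
    · exact .inl hu_root
    · refine .inr (Set.mem_biUnion (x := T.par u) ?_ (T.adj_par u hu_root).symm)
      have := T.depth_par hu_root
      simp only [Set.mem_ofPred_eq] at hu ⊢
      omega

lemma exists_lt_depth_apply_of_finite_fibers {φ : V → V} (hfib : ∀ v, (φ ⁻¹' {v}).Finite)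
    (R : ℕ) : ∃ N : ℕ, ∀ v, N ≤ T.depth v → R < T.depth (φ v) := by
  have hball : (φ ⁻¹' {u | T.depth u ≤ R}).Finite :=
    (T.finite_setOf_depth_le R).preimage' fun v _ => hfib v
  obtain ⟨M, hM⟩ := (hball.image T.depth).bddAbove
  refine ⟨M + 1, fun v hv => not_le.mp fun hφv => ?_⟩
  have := hM ⟨v, hφv, rfl⟩
  omega

variable {T} {f : V → ℂ} {φ : V → V}

lemma MemLip.comp (hf : T.MemLip f) (hφ : T.LipschitzSelfMap φ) : T.MemLip (f ∘ φ) := by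
  obtain ⟨K, hK⟩ := hf
  obtain ⟨C, hC⟩ := hφ
  refine ⟨max K 0 * C, fun v hv => ?_⟩
  calc ‖f (φ v) - f (φ (T.par v))‖ ≤ max K 0 * T.G.dist (φ v) (φ (T.par v)) :=
        T.norm_sub_le_mul_dist f fun u _ hu => (hK u hu).trans (le_max_left K 0)
    _ ≤ max K 0 * C := by gcongr; exact hC v hv

lemma MemLip0.comp (hf : T.MemLip0 f) (hφ : T.LipschitzSelfMap φ)
    (hfib : ∀ v, (φ ⁻¹' {v}).Finite) : T.MemLip0 (f ∘ φ) := by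
  refine ⟨hf.1.comp hφ, fun ε hε => ?_⟩
  obtain ⟨C, hC⟩ := hφ
  set δ := ε / (C + 1)
  obtain ⟨N₀, hN₀⟩ := hf.2 δ (by positivity)
  obtain ⟨N, hN⟩ := T.exists_lt_depth_apply_of_finite_fibers hfib (N₀ + C)
  refine ⟨N, fun v hv hNv => ?_⟩
  have hfar := hN v hNv
  have hnear := hC v hv
  calc ‖f (φ v) - f (φ (T.par v))‖ ≤ δ * T.G.dist (φ v) (φ (T.par v)) := by
        refine T.norm_sub_le_mul_dist f fun u hu hur => (hN₀ u hur ?_).le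
        have : T.depth (φ v) ≤ T.G.dist (φ v) u + T.depth u := T.isTree.connected.dist_triangle
        omega
    _ ≤ δ * C := by gcongr
    _ < ε := by
        rw [div_mul_eq_mul_div, div_lt_iff₀ (by positivity)]
        linarith

end LipTree

/-- If `φ` is Lipschitz and every preimage `φ⁻¹({v})` is finite, then `C_φ` maps `Lip₀`
into itself; in particular this holds if `φ` is injective. -/
theorem comp_maps_lip0_of_finite_fibers {V : Type*} (T : LipTree V) (φ : V → V)
    (hφ : T.LipschitzSelfMap φ) :
    ((∀ v : V, (φ ⁻¹' {v}).Finite) → ∀ f : V → ℂ, T.MemLip0 f → T.MemLip0 (f ∘ φ)) ∧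
    (Function.Injective φ → ∀ f : V → ℂ, T.MemLip0 f → T.MemLip0 (f ∘ φ)) :=
  ⟨fun hfib _ hf => hf.comp hφ hfib, fun hinj _ hf =>
    hf.comp hφ fun _ => (Set.subsingleton_singleton.preimage hinj).finite⟩
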